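/- Let p ≥ 2 and fix t with 0 < t < 2/(p-1). There exist a natural number m₀ ≥ 1 and, for each integer m ≥ m₀, a constant C > 0 depending only on p, t, m (in particular independent of Ω, f and u) with the following property: for every integer n ≥ 1, every open set Ω ⊆ ℝⁿ, every continuous f : Ω → ℝ with f ≥ 0, and every u ∈ C¹(Ω) which is a weak solution of -Δ_p u = f(x) e^u on Ω and is stable on Ω, one has, for every C¹ function φ : ℝⁿ → ℝ with compact support in Ω and 0 ≤ φ ≤ 1: ∫_Ω f e^{(2t+1)u} φ^{pm} dx ≤ C ∫_Ω f^{-2t} |∇φ|^{p(2t+1)} dx, where both sides are Lebesgue integrals with values in [0,∞] (the right-hand side may be +∞ where f vanishes). -/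

import Mathlib

/-!
Test the equation with `e^{2tu} φ^{2k}` and the stability inequality with `e^{tu} φ^k`, where
`2k ≥ p(2t+1)`. With `A = ∫ f e^{(2t+1)u} φ^{2k}` and `B, D, F, G` the integrals of
`e^{2tu} |∇u|^p φ^{2k}`, `e^{2tu} |∇u|^{p-2} ⟨∇u, ∇φ⟩ φ^{2k-1}`, `e^{2tu} |∇u|^{p-2} |∇φ|² φ^{2k-2}`
and `e^{2tu} |∇φ|^p φ^{2k-p}`, this gives `A = 2tB + 2kD` and `A ≤ (p-1)(t²B + 2tkD + k²F)`.
Eliminating `A` leaves `t(2-(p-1)t) B ≤ (p-1)k² F - 2k(1-(p-1)t) D`, whose left coefficient is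
positive exactly because `t < 2/(p-1)`. Young's inequality bounds `|D|` and `F` by `εB + C_ε G`,
so `B`, and then `A`, is at most a constant times `G`. A last Young inequality, with exponents
`(2t+1)/(2t)` and `2t+1`, gives `G ≤ δA + C_δ ∫ f^{-2t} |∇φ|^{p(2t+1)}`, and `δA` is absorbed.
Finally `φ^{pm} ≤ φ^{2k}` since `0 ≤ φ ≤ 1` and `pm ≥ 2k`.
-/

open Real MeasureTheory

namespace Real

theorem rpow_sub_mul_rpow_le_add {P j s a b : ℝ} (hj : 0 ≤ j) (hjP : j ≤ P) (hs : 0 < s)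
    (ha : 0 ≤ a) (hb : 0 ≤ b) :
    a ^ (P - j) * b ^ j ≤ s ^ j * a ^ P + s ^ (j - P) * b ^ P := by
  have hsa : 0 ≤ s ^ j * a ^ P := by positivity
  have hsb : 0 ≤ s ^ (j - P) * b ^ P := by positivity
  rcases le_or_gt b (s * a) with hba | hab
  · calc a ^ (P - j) * b ^ j ≤ a ^ (P - j) * (s * a) ^ j := by gcongr
      _ = s ^ j * a ^ P := by
        rw [mul_rpow hs.le ha, mul_left_comm, ← rpow_add_of_nonneg ha (by linarith) hj,
          sub_add_cancel]
      _ ≤ _ := le_add_of_nonneg_right hsb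
  · calc a ^ (P - j) * b ^ j ≤ (b / s) ^ (P - j) * b ^ j := by
          gcongr
          rw [le_div_iff₀ hs]; linarith
      _ = s ^ (j - P) * b ^ P := by
        rw [div_rpow hb hs.le, div_eq_mul_inv, ← rpow_neg hs.le, neg_sub,
          mul_right_comm, ← rpow_add_of_nonneg hb (by linarith) hj]
        ring_nf
      _ ≤ _ := le_add_of_nonneg_left hsa

theorem rpow_sub_mul_rpow_mul_rpow_le_add {P N j s a b w : ℝ} (hj : 0 ≤ j) (hjP : j ≤ P)
    (hPN : P ≤ N) (hs : 0 < s) (ha : 0 ≤ a) (hb : 0 ≤ b) (hw : 0 ≤ w) :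
    a ^ (P - j) * b ^ j * w ^ (N - j) ≤
      s ^ j * (a ^ P * w ^ N) + s ^ (j - P) * (b ^ P * w ^ (N - P)) := by
  have split : ∀ e, 0 ≤ e → w ^ (e + (N - P)) = w ^ e * w ^ (N - P) := fun e he =>
    rpow_add_of_nonneg hw he (by linarith)
  calc a ^ (P - j) * b ^ j * w ^ (N - j)
      = (a * w) ^ (P - j) * b ^ j * w ^ (N - P) := by
        rw [mul_rpow ha hw, show N - j = (P - j) + (N - P) by ring, split _ (by linarith)]
        ring
    _ ≤ (s ^ j * (a * w) ^ P + s ^ (j - P) * b ^ P) * w ^ (N - P) := by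
        gcongr
        exact rpow_sub_mul_rpow_le_add hj hjP hs (mul_nonneg ha hw) hb
    _ = _ := by
        rw [mul_rpow ha hw, show N = P + (N - P) by ring, split _ (by linarith)]
        ring_nf

theorem rpow_sub_two_mul_sq {a p : ℝ} (ha : 0 ≤ a) (hp : p ≠ 0) : a ^ (p - 2) * a ^ 2 = a ^ p := by
  rw [← rpow_natCast, ← rpow_add' ha (by simpa using hp)]
  norm_num

theorem exp_mul_rpow_mul_rpow_le_add {f v b w p t N s : ℝ} (hf : 0 < f) (ht : 0 < t)
    (hb : 0 ≤ b) (hw0 : 0 ≤ w) (hw1 : w ≤ 1) (hp : 0 ≤ p) (hN : p * (2 * t + 1) ≤ N)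
    (hs : 0 < s) :
    exp (2 * t * v) * b ^ p * w ^ (N - p) ≤
      s ^ (1 / (2 * t + 1)) * (f * exp ((2 * t + 1) * v) * w ^ N) +
        s ^ (1 / (2 * t + 1) - 1) * (f ^ (-(2 * t)) * b ^ (p * (2 * t + 1))) := by
  have h2t : 0 < 2 * t + 1 := by linarith
  set j := 1 / (2 * t + 1)
  have hj : (2 * t + 1) * j = 1 := by simp only [j]; field_simp
  have hj0 : 0 ≤ j := by positivity
  have hj1 : j ≤ 1 := by rw [div_le_one h2t]; linarith
  calc exp (2 * t * v) * b ^ p * w ^ (N - p) ≤ exp (2 * t * v) * b ^ p * w ^ (N * (1 - j)) := by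
        have hNj : N * (1 - j) ≤ N - p := by nlinarith
        exact mul_le_mul_of_nonneg_left
          (rpow_le_rpow_of_exponent_ge' hw0 hw1 (by nlinarith) hNj) (by positivity)
    _ = (f * exp ((2 * t + 1) * v) * w ^ N) ^ (1 - j) *
          (f ^ (-(2 * t)) * b ^ (p * (2 * t + 1))) ^ j := by
        rw [mul_rpow (by positivity) (by positivity), mul_rpow hf.le (exp_pos _).le,
          mul_rpow (by positivity) (by positivity), ← rpow_mul hw0, ← rpow_mul hf.le,
          ← rpow_mul hb, ← exp_mul, mul_assoc p, hj, mul_one, mul_assoc (f ^ (1 - j)),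
          mul_left_comm, ← mul_assoc, ← mul_assoc, ← rpow_add hf,
          show -(2 * t) * j + (1 - j) = 1 - (2 * t + 1) * j by ring, hj, sub_self, rpow_zero,
          show (2 * t + 1) * v * (1 - j) = 2 * t * v by linear_combination (-v) * hj]
        ring
    _ ≤ _ := (rpow_sub_mul_rpow_le_add hj0 hj1 hs (by positivity) (by positivity)).trans_eq
        (by rw [rpow_one, rpow_one])

end Real

def IsAbsorptionConstant (p t q C : ℝ) : Prop :=
  ∀ A B D F G : ℝ, 0 ≤ B → 2 * t * B + 2 * q * D = A →
    A ≤ (p - 1) * (t ^ 2 * B + 2 * t * q * D + q ^ 2 * F) →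
    (∀ s > 0, |D| ≤ s * B + s ^ (1 - p) * G) →
    (∀ s > 0, F ≤ s ^ 2 * B + s ^ (2 - p) * G) →
    A ≤ C * G

theorem exists_isAbsorptionConstant {p t q : ℝ} (hp : 1 < p) (ht : 0 < t)
    (htp : (p - 1) * t < 2) (hq : 0 < q) : ∃ C > 0, IsAbsorptionConstant p t q C := by
  set σ := t * (2 - (p - 1) * t)
  set α := 1 - (p - 1) * t
  set κ := (p - 1) * q ^ 2 + 2 * q * |α|
  have hσ : 0 < σ := mul_pos ht (by linarith)
  have hκ : 0 < κ := by positivity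
  set s := min 1 (σ / (2 * κ))
  have hs : 0 < s := lt_min one_pos (by positivity)
  have hs1 : s ≤ 1 := min_le_left _ _
  have hsκ : κ * s ≤ σ / 2 := by
    have := min_le_right 1 (σ / (2 * κ))
    rw [le_div_iff₀ (by positivity)] at this
    linarith
  set L := (p - 1) * q ^ 2 * s ^ (2 - p) + 2 * q * |α| * s ^ (1 - p)
  have hL : 0 ≤ L := by
    have : 0 ≤ p - 1 := by linarith
    positivity
  refine ⟨(2 * t + 2 * q * s) * (2 * L / σ) + 2 * q * s ^ (1 - p), by positivity, ?_⟩
  intro A B D F G hB hweak hstab hD hF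
  have hD := hD s hs
  have hF := hF s hs
  have hσB : σ * B ≤ (p - 1) * q ^ 2 * F - 2 * q * α * D := by
    linear_combination hstab + hweak
  have hαD : -(2 * q * α * D) ≤ 2 * q * |α| * (s * B + s ^ (1 - p) * G) := by
    have : -(α * D) ≤ |α| * |D| := by rw [← abs_mul]; exact neg_le_abs _
    have : |α| * |D| ≤ |α| * (s * B + s ^ (1 - p) * G) := by gcongr
    nlinarith
  have hs2 : s ^ 2 * B ≤ s * B := by gcongr; nlinarith
  have hB' : σ / 2 * B ≤ L * G := by
    have : (p - 1) * q ^ 2 * F ≤ (p - 1) * q ^ 2 * (s * B + s ^ (2 - p) * G) := by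
      gcongr
      nlinarith
    nlinarith
  have hBG : B ≤ 2 * L / σ * G := by
    rw [div_mul_eq_mul_div, le_div_iff₀ hσ]
    linarith
  calc A = 2 * t * B + 2 * q * D := hweak.symm
    _ ≤ (2 * t + 2 * q * s) * B + 2 * q * s ^ (1 - p) * G := by
      nlinarith [le_abs_self D]
    _ ≤ _ := by
      have := mul_le_mul_of_nonneg_left hBG (by positivity : 0 ≤ 2 * t + 2 * q * s)
      linarith

theorem ENNReal.le_two_mul_of_le_half_add {a b : ENNReal} (ha : a ≠ ⊤) (h : a ≤ a / 2 + b) :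
    a ≤ 2 * b := by
  have : a / 2 ≤ b := by
    rw [← ENNReal.add_le_add_iff_left (ENNReal.div_ne_top ha two_ne_zero), ENNReal.add_halves]
    exact h
  rwa [ENNReal.div_le_iff two_ne_zero ENNReal.ofNat_ne_top, mul_comm] at this

theorem ofReal_integral_le_mul_lintegral_of_absorb {X : Type*} [MeasurableSpace X] {μ : Measure X}
    {a g : X → ℝ} {h : X → ENNReal} {C δ c : ℝ} (hC : 0 ≤ C) (hCδ : C * δ = 2⁻¹)
    (ha : Integrable a μ) (ha0 : 0 ≤ᵐ[μ] a) (hg : Integrable g μ) (hg0 : 0 ≤ᵐ[μ] g)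
    (hag : ∫ x, a x ∂μ ≤ C * ∫ x, g x ∂μ)
    (hgh : ∀ᵐ x ∂μ, ENNReal.ofReal (g x) ≤
      ENNReal.ofReal δ * ENNReal.ofReal (a x) + ENNReal.ofReal c * h x) :
    ENNReal.ofReal (∫ x, a x ∂μ) ≤ ENNReal.ofReal (2 * C * c) * ∫⁻ x, h x ∂μ := by
  have hα := ofReal_integral_eq_lintegral_ofReal ha ha0
  set α := ∫⁻ x, ENNReal.ofReal (a x) ∂μ
  set R := ∫⁻ x, h x ∂μ
  have hg' : ENNReal.ofReal (∫ x, g x ∂μ) ≤ ENNReal.ofReal δ * α + ENNReal.ofReal c * R := by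
    rw [ofReal_integral_eq_lintegral_ofReal hg hg0,
      ← lintegral_const_mul' _ _ ENNReal.ofReal_ne_top,
      ← lintegral_const_mul' _ _ ENNReal.ofReal_ne_top,
      ← lintegral_add_left' (ha.aemeasurable.ennreal_ofReal.const_mul _)]
    exact lintegral_mono_ae hgh
  have habs : α ≤ α / 2 + ENNReal.ofReal (C * c) * R :=
    calc α ≤ ENNReal.ofReal C * ENNReal.ofReal (∫ x, g x ∂μ) := by
          rw [← hα, ← ENNReal.ofReal_mul hC]
          exact ENNReal.ofReal_le_ofReal hag
      _ ≤ ENNReal.ofReal C * (ENNReal.ofReal δ * α + ENNReal.ofReal c * R) := by gcongr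
      _ = _ := by
          rw [mul_add, ← mul_assoc, ← mul_assoc, ← ENNReal.ofReal_mul hC, ← ENNReal.ofReal_mul hC,
            hCδ, ENNReal.ofReal_inv_of_pos two_pos, ENNReal.ofReal_ofNat, div_eq_mul_inv,
            mul_comm α]
  calc ENNReal.ofReal (∫ x, a x ∂μ) ≤ 2 * (ENNReal.ofReal (C * c) * R) :=
        hα ▸ ENNReal.le_two_mul_of_le_half_add (hα ▸ ENNReal.ofReal_ne_top) habs
    _ = _ := by
        rw [← mul_assoc, ← ENNReal.ofReal_ofNat 2, ← ENNReal.ofReal_mul zero_le_two, mul_assoc]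

open scoped Gradient

noncomputable def gelfandDensity {E : Type*} (t : ℝ) (k : ℕ) (f u φ : E → ℝ) (x : E) : ℝ :=
  f x * exp ((2 * t + 1) * u x) * φ x ^ (2 * k)

theorem mul_rpow_le_gelfandDensity {E : Type*} {f u φ : E → ℝ} {t m : ℝ} {k : ℕ} {x : E}
    (hfx : 0 ≤ f x) (hφ0 : 0 ≤ φ x) (hφ1 : φ x ≤ 1) (hm : 2 * k ≤ m) :
    f x * exp ((2 * t + 1) * u x) * φ x ^ m ≤ gelfandDensity t k f u φ x := by
  rw [gelfandDensity, ← rpow_natCast]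
  push_cast
  exact mul_le_mul_of_nonneg_left (rpow_le_rpow_of_exponent_ge' hφ0 hφ1 (by positivity) hm)
    (by positivity)

section TestFunctions

variable {E : Type*} [NormedAddCommGroup E] [NormedSpace ℝ E]

def IsTestFunction (Ω : Set E) (ψ : E → ℝ) : Prop :=
  ContDiff ℝ 1 ψ ∧ HasCompactSupport ψ ∧ tsupport ψ ⊆ Ω

theorem IsTestFunction.exp_mul_pow {Ω : Set E} {u φ : E → ℝ} (hφ : IsTestFunction Ω φ)
    (hΩ : IsOpen Ω) (hu : ContDiffOn ℝ 1 u Ω) (c : ℝ) {j : ℕ} (hj : j ≠ 0) :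
    IsTestFunction Ω (fun x => exp (c * u x) * φ x ^ j) := by
  obtain ⟨hφ, hφc, hφΩ⟩ := hφ
  have hsupp : Function.support (fun x => exp (c * u x) * φ x ^ j) ⊆ tsupport φ :=
    fun x hx => subset_tsupport φ (by simp_all)
  refine ⟨?_, hφc.mono' hsupp, (closure_minimal hsupp (isClosed_tsupport φ)).trans hφΩ⟩
  refine contDiff_of_contDiffOn_union_of_isOpen
    (((contDiffOn_const.mul hu).exp).mul (hφ.contDiffOn.pow j))
    (t := (tsupport φ)ᶜ) (contDiffOn_const.congr fun x hx =>
      Function.notMem_support.mp fun h => hx (hsupp h))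
    (Set.eq_univ_of_forall fun x => (em (x ∈ tsupport φ)).imp (@hφΩ x) id)
    hΩ (isClosed_tsupport φ).isOpen_compl

variable [MeasurableSpace E] [BorelSpace E] {μ : Measure E} [IsFiniteMeasureOnCompacts μ]
  {Ω : Set E} {f u φ : E → ℝ}

theorem IsTestFunction.integrableOn_of_continuousOn {g : E → ℝ}
    (hφ : IsTestFunction Ω φ) (hΩ : MeasurableSet Ω) (hg : ContinuousOn g Ω)
    (h0 : ∀ x ∉ tsupport φ, g x = 0) : IntegrableOn g Ω μ :=
  ((hg.mono hφ.2.2).integrableOn_compact hφ.2.1).of_forall_sdiff_eq_zero hΩ fun x hx => h0 x hx.2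

theorem integrableOn_gelfandDensity (hΩ : IsOpen Ω) (hf : ContinuousOn f Ω)
    (hu : ContDiffOn ℝ 1 u Ω) (hφ : IsTestFunction Ω φ) (t : ℝ) {k : ℕ} (hk : k ≠ 0) :
    IntegrableOn (gelfandDensity t k f u φ) Ω μ :=
  hφ.integrableOn_of_continuousOn hΩ.measurableSet
    ((hf.mul (continuous_exp.comp_continuousOn (continuousOn_const.mul hu.continuousOn))).mul
      (hφ.1.continuous.pow _).continuousOn)
    fun x hx => by simp [gelfandDensity, image_eq_zero_of_notMem_tsupport hx, hk]

end TestFunctions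

section Densities

variable {E : Type*} [NormedAddCommGroup E] [InnerProductSpace ℝ E] [CompleteSpace E]

theorem hasGradientAt_exp_mul_pow {u φ : E → ℝ} {x : E} (hu : DifferentiableAt ℝ u x)
    (hφ : DifferentiableAt ℝ φ x) (c : ℝ) (j : ℕ) :
    HasGradientAt (fun y => exp (c * u y) * φ y ^ j)
      ((exp (c * u x) * c * φ x ^ j) • ∇ u x + (exp (c * u x) * j * φ x ^ (j - 1)) • ∇ φ x) x := by
  rw [hasGradientAt_iff_hasFDerivAt]
  refine (((hu.hasGradientAt.hasFDerivAt.const_mul c).exp).mul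
    ((hasDerivAt_pow j (φ x)).comp_hasFDerivAt x hφ.hasGradientAt.hasFDerivAt)).congr_fderiv ?_
  rw [map_add, map_smul, map_smul, Function.comp_apply]
  module

theorem ContDiffOn.continuousOn_gradient {Ω : Set E} {u : E → ℝ} (hu : ContDiffOn ℝ 1 u Ω)
    (hΩ : IsOpen Ω) : ContinuousOn (∇ u) Ω :=
  (InnerProductSpace.toDual ℝ E).symm.continuous.comp_continuousOn
    (hu.continuousOn_fderiv_of_isOpen hΩ le_rfl)

theorem ContDiff.continuous_gradient {φ : E → ℝ} (hφ : ContDiff ℝ 1 φ) : Continuous (∇ φ) :=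
  continuousOn_univ.mp (hφ.contDiffOn.continuousOn_gradient isOpen_univ)

theorem gradient_eq_zero_of_notMem_tsupport {φ : E → ℝ} {x : E} (hx : x ∉ tsupport φ) :
    ∇ φ x = 0 := by
  rw [gradient, fderiv_of_notMem_tsupport ℝ hx, map_zero]

noncomputable def gradDensity (p t : ℝ) (k : ℕ) (u φ : E → ℝ) (x : E) : ℝ :=
  exp (2 * t * u x) * ‖∇ u x‖ ^ p * φ x ^ (2 * k)

noncomputable def crossDensity (p t : ℝ) (k : ℕ) (u φ : E → ℝ) (x : E) : ℝ :=
  exp (2 * t * u x) * ‖∇ u x‖ ^ (p - 2) * inner ℝ (∇ u x) (∇ φ x) * φ x ^ (2 * k - 1)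

noncomputable def mixedDensity (p t : ℝ) (k : ℕ) (u φ : E → ℝ) (x : E) : ℝ :=
  exp (2 * t * u x) * ‖∇ u x‖ ^ (p - 2) * ‖∇ φ x‖ ^ 2 * φ x ^ (2 * k - 2)

noncomputable def cutoffDensity (p t : ℝ) (k : ℕ) (u φ : E → ℝ) (x : E) : ℝ :=
  exp (2 * t * u x) * ‖∇ φ x‖ ^ p * φ x ^ (2 * k - p)

variable {u φ : E → ℝ} {p t : ℝ} {k : ℕ} {x : E}

theorem rpow_mul_inner_gradient_exp_mul_pow (hu : DifferentiableAt ℝ u x)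
    (hφ : DifferentiableAt ℝ φ x) (hp : p ≠ 0) :
    ‖∇ u x‖ ^ (p - 2) * inner ℝ (∇ u x) (∇ (fun y => exp (2 * t * u y) * φ y ^ (2 * k)) x) =
      2 * t * gradDensity p t k u φ x + 2 * k * crossDensity p t k u φ x := by
  rw [(hasGradientAt_exp_mul_pow hu hφ _ _).gradient, inner_add_right, real_inner_smul_right,
    real_inner_smul_right, real_inner_self_eq_norm_sq, gradDensity, crossDensity,
    ← rpow_sub_two_mul_sq (norm_nonneg _) hp]
  push_cast
  ring

theorem rpow_mul_norm_gradient_exp_mul_pow_sq (hu : DifferentiableAt ℝ u x)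
    (hφ : DifferentiableAt ℝ φ x) (hp : p ≠ 0) (hk : 1 ≤ k) :
    ‖∇ u x‖ ^ (p - 2) * ‖∇ (fun y => exp (t * u y) * φ y ^ k) x‖ ^ 2 =
      t ^ 2 * gradDensity p t k u φ x + 2 * t * k * crossDensity p t k u φ x +
        k ^ 2 * mixedDensity p t k u φ x := by
  obtain ⟨j, rfl⟩ := Nat.exists_eq_add_of_le' hk
  rw [(hasGradientAt_exp_mul_pow hu hφ _ _).gradient, norm_add_sq_real, norm_smul, norm_smul,
    real_inner_smul_left, real_inner_smul_right, gradDensity, crossDensity, mixedDensity,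
    ← rpow_sub_two_mul_sq (norm_nonneg (∇ u x)) hp,
    show 2 * t * u x = t * u x + t * u x by ring, exp_add,
    show 2 * (j + 1) - 1 = 2 * j + 1 by omega, show 2 * (j + 1) - 2 = 2 * j by omega]
  simp only [Real.norm_eq_abs, mul_pow, sq_abs, Nat.add_sub_cancel]
  push_cast
  ring

theorem abs_crossDensity_le (hp : 2 ≤ p) (hk : p ≤ 2 * k) (hφx : 0 ≤ φ x) {s : ℝ} (hs : 0 < s) :
    |crossDensity p t k u φ x| ≤
      s * gradDensity p t k u φ x + s ^ (1 - p) * cutoffDensity p t k u φ x := by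
  have hk1 : 1 ≤ 2 * k := by exact_mod_cast (show (1 : ℝ) ≤ 2 * k by linarith)
  calc |crossDensity p t k u φ x|
        = exp (2 * t * u x) * ‖∇ u x‖ ^ (p - 2) * |inner ℝ (∇ u x) (∇ φ x)| *
            φ x ^ (2 * k - 1) := by
        simp only [crossDensity, abs_mul, abs_of_nonneg (exp_pos _).le, abs_of_nonneg
          (rpow_nonneg (norm_nonneg _) _), abs_of_nonneg (pow_nonneg hφx _)]
    _ ≤ exp (2 * t * u x) * ‖∇ u x‖ ^ (p - 2) * (‖∇ u x‖ * ‖∇ φ x‖) * φ x ^ (2 * k - 1) := by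
        gcongr
        exact abs_real_inner_le_norm _ _
    _ = exp (2 * t * u x) * (‖∇ u x‖ ^ (p - 1) * ‖∇ φ x‖ ^ (1 : ℝ) * φ x ^ ((2 * k : ℝ) - 1)) := by
        rw [show p - 1 = (p - 2) + 1 by ring, rpow_add' (norm_nonneg _) (by linarith), rpow_one,
          rpow_one, ← rpow_natCast, Nat.cast_sub hk1]
        push_cast
        ring
    _ ≤ exp (2 * t * u x) * (s ^ (1 : ℝ) * (‖∇ u x‖ ^ p * φ x ^ (2 * k : ℝ)) +
          s ^ (1 - p) * (‖∇ φ x‖ ^ p * φ x ^ ((2 * k : ℝ) - p))) := by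
        gcongr
        exact rpow_sub_mul_rpow_mul_rpow_le_add zero_le_one (by linarith) hk hs (norm_nonneg _)
          (norm_nonneg _) hφx
    _ = _ := by
        rw [rpow_one, gradDensity, cutoffDensity, ← Nat.cast_ofNat, ← Nat.cast_mul, rpow_natCast]
        ring

theorem mixedDensity_le (hp : 2 ≤ p) (hk : p ≤ 2 * k) (hφx : 0 ≤ φ x) {s : ℝ} (hs : 0 < s) :
    mixedDensity p t k u φ x ≤
      s ^ 2 * gradDensity p t k u φ x + s ^ (2 - p) * cutoffDensity p t k u φ x := by
  have hk2 : 2 ≤ 2 * k := by exact_mod_cast (show (2 : ℝ) ≤ 2 * k by linarith)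
  calc mixedDensity p t k u φ x = exp (2 * t * u x) *
        (‖∇ u x‖ ^ (p - 2) * ‖∇ φ x‖ ^ (2 : ℝ) * φ x ^ ((2 * k : ℝ) - 2)) := by
        rw [mixedDensity, rpow_two, ← rpow_natCast (φ x), Nat.cast_sub hk2]
        push_cast
        ring
    _ ≤ exp (2 * t * u x) * (s ^ (2 : ℝ) * (‖∇ u x‖ ^ p * φ x ^ (2 * k : ℝ)) +
          s ^ (2 - p) * (‖∇ φ x‖ ^ p * φ x ^ ((2 * k : ℝ) - p))) := by
        gcongr
        exact rpow_sub_mul_rpow_mul_rpow_le_add zero_le_two hp hk hs (norm_nonneg _)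
          (norm_nonneg _) hφx
    _ = _ := by
        rw [rpow_two, gradDensity, cutoffDensity, ← Nat.cast_ofNat, ← Nat.cast_mul, rpow_natCast]
        ring

theorem ofReal_cutoffDensity_le {f : E → ℝ} (hp : 0 < p) (ht : 0 < t) (hk : p * (2 * t + 1) ≤ 2 * k)
    (hfx : 0 ≤ f x) (hφ0 : 0 ≤ φ x) (hφ1 : φ x ≤ 1) {s : ℝ} (hs : 0 < s) :
    ENNReal.ofReal (cutoffDensity p t k u φ x) ≤
      ENNReal.ofReal (s ^ (1 / (2 * t + 1))) * ENNReal.ofReal (gelfandDensity t k f u φ x) +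
        ENNReal.ofReal (s ^ (1 / (2 * t + 1) - 1)) *
          (ENNReal.ofReal (f x) ^ (-(2 * t)) * ENNReal.ofReal (‖∇ φ x‖ ^ (p * (2 * t + 1)))) := by
  rcases hfx.eq_or_lt with hf0 | hfpos
  · by_cases hg : ∇ φ x = 0
    · simp [cutoffDensity, hg, zero_rpow hp.ne']
    -- where `f` vanishes but `∇φ` does not, the right-hand side is `∞`
    have hg' : 0 < ‖∇ φ x‖ := norm_pos_iff.mpr hg
    rw [← hf0, ENNReal.ofReal_zero, ENNReal.zero_rpow_of_neg (by linarith),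
      ENNReal.top_mul (by simp only [ne_eq, ENNReal.ofReal_eq_zero, not_le]; positivity),
      ENNReal.mul_top (by simp only [ne_eq, ENNReal.ofReal_eq_zero, not_le]; positivity),
      add_top]
    exact le_top
  · rw [ENNReal.ofReal_rpow_of_pos hfpos, ← ENNReal.ofReal_mul (by positivity),
      ← ENNReal.ofReal_mul (by positivity), ← ENNReal.ofReal_mul (by positivity),
      ← ENNReal.ofReal_add (by unfold gelfandDensity; positivity) (by positivity)]
    refine ENNReal.ofReal_le_ofReal ?_
    rw [cutoffDensity, gelfandDensity, ← rpow_natCast]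
    push_cast
    exact exp_mul_rpow_mul_rpow_le_add hfpos ht (norm_nonneg _) hφ0 hφ1 hp.le hk hs

end Densities

section WeakSolutions

variable {E : Type*} [NormedAddCommGroup E] [InnerProductSpace ℝ E] [CompleteSpace E]
  [MeasurableSpace E]

def IsWeakGelfandSolution (μ : Measure E) (p : ℝ) (Ω : Set E) (f u : E → ℝ) : Prop :=
  ∀ ψ : E → ℝ, IsTestFunction Ω ψ →
    ∫ x in Ω, ‖∇ u x‖ ^ (p - 2) * inner ℝ (∇ u x) (∇ ψ x) ∂μ = ∫ x in Ω, f x * exp (u x) * ψ x ∂μ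

def IsStableGelfandSolution (μ : Measure E) (p : ℝ) (Ω : Set E) (f u : E → ℝ) : Prop :=
  ∀ ψ : E → ℝ, IsTestFunction Ω ψ →
    ∫ x in Ω, f x * exp (u x) * ψ x ^ 2 ∂μ ≤ (p - 1) * ∫ x in Ω, ‖∇ u x‖ ^ (p - 2) * ‖∇ ψ x‖ ^ 2 ∂μ

variable [BorelSpace E] {μ : Measure E} [IsFiniteMeasureOnCompacts μ]
  {Ω : Set E} {f u φ : E → ℝ} {p t : ℝ} {k : ℕ}

theorem integrableOn_gradDensity (hΩ : IsOpen Ω) (hu : ContDiffOn ℝ 1 u Ω)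
    (hφ : IsTestFunction Ω φ) (hp : 0 ≤ p) (hk : k ≠ 0) :
    IntegrableOn (gradDensity p t k u φ) Ω μ :=
  hφ.integrableOn_of_continuousOn hΩ.measurableSet
    (((continuous_exp.comp_continuousOn (continuousOn_const.mul hu.continuousOn)).mul
      ((hu.continuousOn_gradient hΩ).norm.rpow_const fun _ _ => Or.inr hp)).mul
      (hφ.1.continuous.pow _).continuousOn)
    fun x hx => by simp [gradDensity, image_eq_zero_of_notMem_tsupport hx, hk]

theorem integrableOn_crossDensity (hΩ : IsOpen Ω) (hu : ContDiffOn ℝ 1 u Ω)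
    (hφ : IsTestFunction Ω φ) (hp : 2 ≤ p) :
    IntegrableOn (crossDensity p t k u φ) Ω μ :=
  hφ.integrableOn_of_continuousOn hΩ.measurableSet
    ((((continuous_exp.comp_continuousOn (continuousOn_const.mul hu.continuousOn)).mul
      ((hu.continuousOn_gradient hΩ).norm.rpow_const fun _ _ => Or.inr (by linarith))).mul
      ((hu.continuousOn_gradient hΩ).inner
        hφ.1.continuous_gradient.continuousOn)).mul
      (hφ.1.continuous.pow _).continuousOn)
    fun x hx => by simp [crossDensity, gradient_eq_zero_of_notMem_tsupport hx]

theorem integrableOn_mixedDensity (hΩ : IsOpen Ω) (hu : ContDiffOn ℝ 1 u Ω)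
    (hφ : IsTestFunction Ω φ) (hp : 2 ≤ p) :
    IntegrableOn (mixedDensity p t k u φ) Ω μ :=
  hφ.integrableOn_of_continuousOn hΩ.measurableSet
    ((((continuous_exp.comp_continuousOn (continuousOn_const.mul hu.continuousOn)).mul
      ((hu.continuousOn_gradient hΩ).norm.rpow_const fun _ _ => Or.inr (by linarith))).mul
      (hφ.1.continuous_gradient.continuousOn.norm.pow 2)).mul
      (hφ.1.continuous.pow _).continuousOn)
    fun x hx => by simp [mixedDensity, gradient_eq_zero_of_notMem_tsupport hx]

theorem integrableOn_cutoffDensity (hΩ : IsOpen Ω) (hu : ContDiffOn ℝ 1 u Ω)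
    (hφ : IsTestFunction Ω φ) (hp : 0 < p) (hk : p ≤ 2 * k) :
    IntegrableOn (cutoffDensity p t k u φ) Ω μ :=
  hφ.integrableOn_of_continuousOn hΩ.measurableSet
    (((continuous_exp.comp_continuousOn (continuousOn_const.mul hu.continuousOn)).mul
      (hφ.1.continuous_gradient.continuousOn.norm.rpow_const
        fun _ _ => Or.inr hp.le)).mul
      (hφ.1.continuous.continuousOn.rpow_const fun _ _ => Or.inr (by linarith)))
    fun x hx => by simp [cutoffDensity, gradient_eq_zero_of_notMem_tsupport hx, hp.ne']

theorem IsWeakGelfandSolution.integral_gradDensity_add_crossDensity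
    (hsol : IsWeakGelfandSolution μ p Ω f u) (hΩ : IsOpen Ω) (hu : ContDiffOn ℝ 1 u Ω)
    (hφ : IsTestFunction Ω φ) (hp : 2 ≤ p) (t : ℝ) (hk : 1 ≤ k) :
    2 * t * ∫ x in Ω, gradDensity p t k u φ x ∂μ + 2 * k * ∫ x in Ω, crossDensity p t k u φ x ∂μ =
      ∫ x in Ω, gelfandDensity t k f u φ x ∂μ := by
  have hB : IntegrableOn (gradDensity p t k u φ) Ω μ :=
    integrableOn_gradDensity hΩ hu hφ (by linarith) (by omega)
  have hD : IntegrableOn (crossDensity p t k u φ) Ω μ := integrableOn_crossDensity hΩ hu hφ hp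
  calc _ = ∫ x in Ω, ‖∇ u x‖ ^ (p - 2) *
        inner ℝ (∇ u x) (∇ (fun y => exp (2 * t * u y) * φ y ^ (2 * k)) x) ∂μ := by
        rw [setIntegral_congr_fun hΩ.measurableSet fun x hx => rpow_mul_inner_gradient_exp_mul_pow
            ((hu.differentiableOn one_ne_zero).differentiableAt (hΩ.mem_nhds hx))
            (hφ.1.differentiable one_ne_zero x) (by linarith),
          integral_add (hB.const_mul _) (hD.const_mul _), integral_const_mul, integral_const_mul]
    _ = ∫ x in Ω, f x * exp (u x) * (exp (2 * t * u x) * φ x ^ (2 * k)) ∂μ :=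
        hsol _ (hφ.exp_mul_pow hΩ hu (2 * t) (by omega))
    _ = _ := by
        congr 1 with x
        rw [gelfandDensity, add_mul, exp_add, one_mul]
        ring

theorem IsStableGelfandSolution.integral_gelfandDensity_le
    (hsol : IsStableGelfandSolution μ p Ω f u) (hΩ : IsOpen Ω) (hu : ContDiffOn ℝ 1 u Ω)
    (hφ : IsTestFunction Ω φ) (hp : 2 ≤ p) (t : ℝ) (hk : 1 ≤ k) :
    ∫ x in Ω, gelfandDensity t k f u φ x ∂μ ≤
      (p - 1) * (t ^ 2 * ∫ x in Ω, gradDensity p t k u φ x ∂μ +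
        2 * t * k * ∫ x in Ω, crossDensity p t k u φ x ∂μ +
          k ^ 2 * ∫ x in Ω, mixedDensity p t k u φ x ∂μ) := by
  have hB : IntegrableOn (gradDensity p t k u φ) Ω μ :=
    integrableOn_gradDensity hΩ hu hφ (by linarith) (by omega)
  have hD : IntegrableOn (crossDensity p t k u φ) Ω μ := integrableOn_crossDensity hΩ hu hφ hp
  have hF : IntegrableOn (mixedDensity p t k u φ) Ω μ := integrableOn_mixedDensity hΩ hu hφ hp
  calc _ = ∫ x in Ω, f x * exp (u x) * (exp (t * u x) * φ x ^ k) ^ 2 ∂μ := by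
        congr 1 with x
        rw [gelfandDensity, add_mul, exp_add, one_mul, mul_pow, ← exp_nat_mul, ← pow_mul]
        push_cast
        ring_nf
    _ ≤ (p - 1) * ∫ x in Ω, ‖∇ u x‖ ^ (p - 2) *
        ‖∇ (fun y => exp (t * u y) * φ y ^ k) x‖ ^ 2 ∂μ :=
        hsol _ (hφ.exp_mul_pow hΩ hu t (by omega))
    _ = _ := by
        rw [setIntegral_congr_fun hΩ.measurableSet fun x hx =>
            rpow_mul_norm_gradient_exp_mul_pow_sq
            ((hu.differentiableOn one_ne_zero).differentiableAt (hΩ.mem_nhds hx))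
            (hφ.1.differentiable one_ne_zero x) (by linarith) hk,
          integral_add _ (hF.const_mul _), integral_add (hB.const_mul _) (hD.const_mul _),
          integral_const_mul, integral_const_mul, integral_const_mul]
        exact (hB.const_mul _).add (hD.const_mul _)

theorem abs_integral_crossDensity_le (hΩ : IsOpen Ω) (hu : ContDiffOn ℝ 1 u Ω)
    (hφ : IsTestFunction Ω φ) (hφ0 : ∀ x, 0 ≤ φ x) (hp : 2 ≤ p) (t : ℝ) (hk : p ≤ 2 * k)
    {s : ℝ} (hs : 0 < s) :
    |∫ x in Ω, crossDensity p t k u φ x ∂μ| ≤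
      s * ∫ x in Ω, gradDensity p t k u φ x ∂μ +
        s ^ (1 - p) * ∫ x in Ω, cutoffDensity p t k u φ x ∂μ := by
  have hB : IntegrableOn (gradDensity p t k u φ) Ω μ :=
    integrableOn_gradDensity hΩ hu hφ (by linarith) (by rintro rfl; norm_num at hk; linarith)
  have hG : IntegrableOn (cutoffDensity p t k u φ) Ω μ :=
    integrableOn_cutoffDensity hΩ hu hφ (by linarith) hk
  rw [← integral_const_mul, ← integral_const_mul, ← integral_add (hB.const_mul _) (hG.const_mul _)]
  exact abs_integral_le_integral_abs.trans <|
    integral_mono_of_nonneg (ae_of_all _ fun _ => abs_nonneg _)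
      ((hB.const_mul _).add (hG.const_mul _))
      (ae_of_all _ fun x => abs_crossDensity_le hp hk (hφ0 x) hs)

theorem integral_mixedDensity_le (hΩ : IsOpen Ω) (hu : ContDiffOn ℝ 1 u Ω)
    (hφ : IsTestFunction Ω φ) (hφ0 : ∀ x, 0 ≤ φ x) (hp : 2 ≤ p) (t : ℝ) (hk : p ≤ 2 * k)
    {s : ℝ} (hs : 0 < s) :
    ∫ x in Ω, mixedDensity p t k u φ x ∂μ ≤
      s ^ 2 * ∫ x in Ω, gradDensity p t k u φ x ∂μ +
        s ^ (2 - p) * ∫ x in Ω, cutoffDensity p t k u φ x ∂μ := by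
  have hB : IntegrableOn (gradDensity p t k u φ) Ω μ :=
    integrableOn_gradDensity hΩ hu hφ (by linarith) (by rintro rfl; norm_num at hk; linarith)
  have hG : IntegrableOn (cutoffDensity p t k u φ) Ω μ :=
    integrableOn_cutoffDensity hΩ hu hφ (by linarith) hk
  rw [← integral_const_mul, ← integral_const_mul, ← integral_add (hB.const_mul _) (hG.const_mul _)]
  exact integral_mono_of_nonneg
    (ae_of_all _ fun x => by unfold mixedDensity; have := hφ0 x; positivity)
    ((hB.const_mul _).add (hG.const_mul _)) (ae_of_all _ fun x => mixedDensity_le hp hk (hφ0 x) hs)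

theorem integral_gelfandDensity_le_mul_integral_cutoffDensity {C : ℝ}
    (hC : IsAbsorptionConstant p t k C) (hweak : IsWeakGelfandSolution μ p Ω f u)
    (hstab : IsStableGelfandSolution μ p Ω f u) (hΩ : IsOpen Ω) (hu : ContDiffOn ℝ 1 u Ω)
    (hφ : IsTestFunction Ω φ) (hφ0 : ∀ x, 0 ≤ φ x) (hp : 2 ≤ p) (hk : p ≤ 2 * k) :
    ∫ x in Ω, gelfandDensity t k f u φ x ∂μ ≤ C * ∫ x in Ω, cutoffDensity p t k u φ x ∂μ := by
  have hk1 : 1 ≤ k := by exact_mod_cast (show (1 : ℝ) ≤ k by linarith)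
  exact hC _ _ _ _ _
    (integral_nonneg fun x => by unfold gradDensity; have := hφ0 x; positivity)
    (hweak.integral_gradDensity_add_crossDensity hΩ hu hφ hp t hk1)
    (hstab.integral_gelfandDensity_le hΩ hu hφ hp t hk1)
    (fun _ hs => abs_integral_crossDensity_le hΩ hu hφ hφ0 hp t hk hs)
    (fun _ hs => integral_mixedDensity_le hΩ hu hφ hφ0 hp t hk hs)

theorem lintegral_exp_mul_rpow_le_of_isAbsorptionConstant {C s m : ℝ}
    (hC : IsAbsorptionConstant p t k C) (hC0 : 0 ≤ C) (hs : 0 < s)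
    (hCs : C * s ^ (1 / (2 * t + 1)) = 2⁻¹) (hweak : IsWeakGelfandSolution μ p Ω f u)
    (hstab : IsStableGelfandSolution μ p Ω f u) (hΩ : IsOpen Ω) (hf : ContinuousOn f Ω)
    (hf0 : ∀ x ∈ Ω, 0 ≤ f x) (hu : ContDiffOn ℝ 1 u Ω) (hφ : IsTestFunction Ω φ)
    (hφ0 : ∀ x, 0 ≤ φ x) (hφ1 : ∀ x, φ x ≤ 1) (hp : 2 ≤ p) (ht : 0 < t)
    (hk : p * (2 * t + 1) ≤ 2 * k) (hm : 2 * k ≤ m) :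
    ∫⁻ x in Ω, ENNReal.ofReal (f x * exp ((2 * t + 1) * u x) * φ x ^ m) ∂μ ≤
      ENNReal.ofReal (2 * C * s ^ (1 / (2 * t + 1) - 1)) *
        ∫⁻ x in Ω, ENNReal.ofReal (f x) ^ (-(2 * t)) *
          ENNReal.ofReal (‖∇ φ x‖ ^ (p * (2 * t + 1))) ∂μ := by
  have hk1 : k ≠ 0 := by rintro rfl; norm_num at hk; nlinarith
  have hA : IntegrableOn (gelfandDensity t k f u φ) Ω μ :=
    integrableOn_gelfandDensity hΩ hf hu hφ t hk1
  have hA0 : ∀ᵐ x ∂μ.restrict Ω, 0 ≤ gelfandDensity t k f u φ x :=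
    ae_restrict_of_forall_mem hΩ.measurableSet fun x hx => by
      unfold gelfandDensity; have := hf0 x hx; have := hφ0 x; positivity
  calc _ ≤ ∫⁻ x in Ω, ENNReal.ofReal (gelfandDensity t k f u φ x) ∂μ :=
        lintegral_mono_ae <| ae_restrict_of_forall_mem hΩ.measurableSet fun x hx =>
          ENNReal.ofReal_le_ofReal (mul_rpow_le_gelfandDensity (hf0 x hx) (hφ0 x) (hφ1 x) hm)
    _ = ENNReal.ofReal (∫ x in Ω, gelfandDensity t k f u φ x ∂μ) :=
        (ofReal_integral_eq_lintegral_ofReal hA hA0).symm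
    _ ≤ _ := ofReal_integral_le_mul_lintegral_of_absorb hC0 hCs hA hA0
        (integrableOn_cutoffDensity hΩ hu hφ (by linarith) (by nlinarith))
        (ae_of_all _ fun x => by unfold cutoffDensity; have := hφ0 x; positivity)
        (integral_gelfandDensity_le_mul_integral_cutoffDensity hC hweak hstab hΩ hu hφ hφ0 hp
          (by nlinarith))
        (ae_restrict_of_forall_mem hΩ.measurableSet fun x hx =>
          ofReal_cutoffDensity_le (by linarith) ht hk (hf0 x hx) (hφ0 x) (hφ1 x) hs)

end WeakSolutions

/-- Moser-iteration estimate (Gelfand nonlinearity, exponent `p·m`) for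
stable weak solutions of `-Δ_p u = f(x) e^u`:
`∫_Ω f e^{(2t+1)u} φ^{pm} ≤ C ∫_Ω f^{-2t} |∇φ|^{p(2t+1)}` for `0 < t < 2/(p-1)`,
with `C` independent of `Ω`, `f` and `u`; both sides are `[0,∞]`-valued integrals. -/
theorem moser_estimate_gelfand_pm
    (p t : ℝ) (hp : 2 ≤ p) (ht1 : 0 < t) (ht2 : t < 2 / (p - 1)) :
    ∃ m₀ : ℕ, 1 ≤ m₀ ∧ ∀ m : ℕ, m₀ ≤ m → ∃ C : ℝ, 0 < C ∧
      ∀ (n : ℕ), 1 ≤ n →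
      ∀ Ω : Set (EuclideanSpace ℝ (Fin n)), IsOpen Ω →
      ∀ f : EuclideanSpace ℝ (Fin n) → ℝ, ContinuousOn f Ω → (∀ x ∈ Ω, 0 ≤ f x) →
      ∀ u : EuclideanSpace ℝ (Fin n) → ℝ, ContDiffOn ℝ 1 u Ω →
      (∀ φ : EuclideanSpace ℝ (Fin n) → ℝ, ContDiff ℝ 1 φ → HasCompactSupport φ →
        tsupport φ ⊆ Ω →
        (∫ x in Ω, ‖gradient u x‖ ^ (p - 2) * (inner ℝ (gradient u x) (gradient φ x) : ℝ)) =
          ∫ x in Ω, f x * Real.exp (u x) * φ x) →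
      (∀ φ : EuclideanSpace ℝ (Fin n) → ℝ, ContDiff ℝ 1 φ → HasCompactSupport φ →
        tsupport φ ⊆ Ω →
        (∫ x in Ω, f x * Real.exp (u x) * φ x ^ 2) ≤
          (p - 1) * ∫ x in Ω, ‖gradient u x‖ ^ (p - 2) * ‖gradient φ x‖ ^ 2) →
      ∀ φ : EuclideanSpace ℝ (Fin n) → ℝ, ContDiff ℝ 1 φ → HasCompactSupport φ →
        tsupport φ ⊆ Ω → (∀ x, 0 ≤ φ x) → (∀ x, φ x ≤ 1) →
        (∫⁻ x in Ω, ENNReal.ofReal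
            (f x * Real.exp ((2 * t + 1) * u x) * φ x ^ (p * (m : ℝ)))) ≤
          ENNReal.ofReal C *
            ∫⁻ x in Ω, ENNReal.ofReal (f x) ^ (-(2 * t)) *
              ENNReal.ofReal (‖gradient φ x‖ ^ (p * (2 * t + 1))) := by
  have htp : (p - 1) * t < 2 := by rwa [lt_div_iff₀ (by linarith), mul_comm] at ht2
  obtain ⟨k, hk⟩ := exists_nat_ge (p * (2 * t + 1) / 2)
  have hk1 : 1 ≤ k := by exact_mod_cast (show (1 : ℝ) ≤ k by nlinarith)
  obtain ⟨C, hC0, hC⟩ :=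
    exists_isAbsorptionConstant (by linarith) ht1 htp (show (0 : ℝ) < k by positivity)
  -- makes the Young weight of `A` in the bound for `G` equal to `1 / (2C)`, so it can be absorbed
  set s := (2 * C) ^ (-(2 * t + 1))
  have hCs : C * s ^ (1 / (2 * t + 1)) = 2⁻¹ := by
    rw [← rpow_mul (by positivity), show -(2 * t + 1) * (1 / (2 * t + 1)) = -1 by field_simp,
      rpow_neg_one]
    field_simp
  refine ⟨k, hk1, fun m hm => ⟨2 * C * s ^ (1 / (2 * t + 1) - 1), by positivity, ?_⟩⟩
  intro n _ Ω hΩ f hf hf0 u hu hweak hstab φ hφ hφc hφΩ hφ0 hφ1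
  have hkm : (k : ℝ) ≤ m := by exact_mod_cast hm
  exact lintegral_exp_mul_rpow_le_of_isAbsorptionConstant hC hC0.le (by positivity) hCs
    (fun ψ hψ => hweak ψ hψ.1 hψ.2.1 hψ.2.2) (fun ψ hψ => hstab ψ hψ.1 hψ.2.1 hψ.2.2) hΩ hf hf0
    hu ⟨hφ, hφc, hφΩ⟩ hφ0 hφ1 hp ht1 (by linarith) (by nlinarith)
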